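/- Let S be a linearization of a history F = E·E' (concatenation), obtained via an extension F' of F, and let S_E be the shortest prefix of S containing all operations complete in E. Then S_E contains no operation whose invocation appears in E'. -/

import Mathlib

/-! If some event of an operation `o` invoked in `E'` lay in `S_E`, then, `S` being sequential,
the invocation of `o` would lie in `S_E`, at some position `k`; it is the only invocation of `o`
in `S`, because `S` is a permutation of `comp F'` and `F` is well formed. Every operation complete
in `E` responds in `F'` before `o` is invoked in `E'`, so it precedes `o` in `S`, and its
invocation lies among the first `k` events of `S`. That prefix is shorter than `S_E`, against
the minimality of `S_E`. -/

namespace RV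

inductive Event where
  | inv (p : ℕ) (op : ℕ)
  | res (p : ℕ) (op : ℕ)
deriving DecidableEq

abbrev History := List Event

def Event.proc : Event → ℕ
  | .inv p _ => p
  | .res p _ => p

def Event.op : Event → ℕ
  | .inv _ o => o
  | .res _ o => o

def Event.isInv : Event → Bool
  | .inv _ _ => true
  | .res _ _ => false

/-- The subsequence of events of process `p`. -/
def proj (E : History) (p : ℕ) : History := E.filter (fun e => e.proc == p)

/-- Two histories are equivalent if every process has the same subsequence of events. -/
def Equivalent (E F : History) : Prop := ∀ p, proj E p = proj F p

/-- Operation `a` precedes operation `b` in `E`: the response of `a` occurs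
before the invocation of `b`. -/
def prec (E : History) (a b : ℕ) : Prop :=
  ∃ i j p q, i < j ∧ E[(i : ℕ)]? = some (Event.res p a) ∧ E[(j : ℕ)]? = some (Event.inv q b)

/-- A single process' subsequence alternates invocation, matching response, ... ,
possibly ending with a pending invocation. -/
inductive Alt : History → Prop where
  | nil : Alt []
  | pend (p o : ℕ) : Alt [Event.inv p o]
  | step (p o : ℕ) (l : History) : Alt l → Alt (Event.inv p o :: Event.res p o :: l)

/-- Well-formed history: per-process alternation, and every operation identifier is
invoked at most once and responded at most once. -/
def WellFormed (E : History) : Prop :=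
  (∀ p, Alt (proj E p)) ∧
  (∀ o, E.countP (fun e => e.isInv && e.op == o) ≤ 1) ∧
  (∀ o, E.countP (fun e => !e.isInv && e.op == o) ≤ 1)

def CompleteIn (E : History) (o : ℕ) : Prop :=
  (∃ p, Event.inv p o ∈ E) ∧ ∃ q, Event.res q o ∈ E

def PendingIn (E : History) (o : ℕ) : Prop :=
  (∃ p, Event.inv p o ∈ E) ∧ ∀ q, Event.res q o ∉ E

def hasRes (E : History) (o : ℕ) : Bool := E.any (fun e => !e.isInv && e.op == o)

/-- `comp E` removes the invocations of pending operations. -/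
def comp (E : History) : History := E.filter (fun e => !e.isInv || hasRes E e.op)

/-- `E'` extends `E` by appending responses to some pending operations. -/
def IsExtension (E E' : History) : Prop :=
  ∃ rs : History, E' = E ++ rs ∧
    (∀ e ∈ rs, e.isInv = false ∧ PendingIn E e.op ∧ Event.inv e.proc e.op ∈ E) ∧
    rs.Pairwise (fun a b => a.op ≠ b.op)

/-- Sequential histories: alternating invocation/matching-response pairs. -/
inductive Seq : History → Prop where
  | nil : Seq []
  | step (p o : ℕ) (l : History) : Seq l → Seq (Event.inv p o :: Event.res p o :: l)

/-- `E` is linearizable w.r.t. the sequential object `O` (a set of sequential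
histories): there is an extension `E'` of `E` and `S ∈ O` such that `comp E'`
and `S` are equivalent and `<_{comp E'} ⊆ <_S`. -/
def Linearizable (O : Set History) (E : History) : Prop :=
  ∃ E', IsExtension E E' ∧ ∃ S ∈ O, Equivalent (comp E') S ∧
    ∀ a b, prec (comp E') a b → prec S a b

/-- `E` is similar to `F`: some history `E'`, obtained from `E` by appending
responses to some pending operations and removing the invocations of some other
pending operations, is equivalent to `F` and satisfies `≺_{E'} ⊆ ≺_F`. -/
def Similar (E F : History) : Prop :=
  ∃ (keep : Event → Bool) (rs : History),
    (∀ e ∈ E, keep e = false → e.isInv = true ∧ PendingIn E e.op) ∧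
    (∀ e ∈ rs, e.isInv = false ∧ PendingIn E e.op ∧ Event.inv e.proc e.op ∈ E ∧
      keep (Event.inv e.proc e.op) = true) ∧
    rs.Pairwise (fun a b => a.op ≠ b.op) ∧
    Equivalent (E.filter keep ++ rs) F ∧
    (∀ a b, prec (E.filter keep ++ rs) a b → prec F a b)

/-- The class `GenLin`: sets of well-formed histories closed under prefixes and
under similarity. -/
def GenLin (O : Set History) : Prop :=
  (∀ F ∈ O, ∀ E : History, E <+: F → E ∈ O) ∧
  (∀ F ∈ O, ∀ E : History, Similar E F → E ∈ O)

end RV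

theorem List.eq_of_getElem?_of_countP_le_one {α : Type*} {P : α → Bool} :
    ∀ {l : List α} {i j : ℕ} {a b : α}, l.countP P ≤ 1 → l[i]? = some a → l[j]? = some b →
      P a → P b → i = j
  | [], _, _, _, _, _, hi, _, _, _ => by simp at hi
  | _ :: _, 0, 0, _, _, _, _, _, _, _ => rfl
  | x :: l, 0, j + 1, a, b, hl, hi, hj, ha, hb => by
    obtain rfl : x = a := by simpa using hi
    have : 0 < l.countP P := List.countP_pos_iff.mpr ⟨b, List.mem_of_getElem? hj, hb⟩
    rw [List.countP_cons_of_pos ha] at hl; omega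
  | x :: l, i + 1, 0, a, b, hl, hi, hj, ha, hb => by
    obtain rfl : x = b := by simpa using hj
    have : 0 < l.countP P := List.countP_pos_iff.mpr ⟨a, List.mem_of_getElem? hi, ha⟩
    rw [List.countP_cons_of_pos hb] at hl; omega
  | x :: l, i + 1, j + 1, _, _, hl, hi, hj, ha, hb => by
    have hl' : l.countP P ≤ 1 := (List.sublist_cons_self x l).countP_le.trans hl
    rw [List.eq_of_getElem?_of_countP_le_one hl' hi hj ha hb]

namespace RV

theorem Equivalent.perm {E F : History} (h : Equivalent E F) : E.Perm F := by
  refine List.perm_iff_count.mpr fun a => ?_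
  simpa [proj, List.count_filter] using congrArg (List.count a) (h a.proc)

theorem prec_of_sublist {E : History} {p q a b : ℕ}
    (h : List.Sublist [Event.res p a, Event.inv q b] E) : prec E a b := by
  obtain ⟨f, hf⟩ := List.sublist_iff_exists_orderEmbedding_getElem?_eq.mp h
  exact ⟨f 0, f 1, p, q, f.strictMono zero_lt_one, (hf 0).symm, (hf 1).symm⟩

theorem hasRes_of_mem_comp {E : History} {e : Event} (h : e ∈ comp E) : hasRes E e.op := by
  obtain ⟨hE, hkeep⟩ := List.mem_filter.mp h
  cases e with
  | inv p o => simpa [Event.isInv] using hkeep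
  | res p o => exact List.any_eq_true.mpr ⟨_, hE, by simp [Event.isInv]⟩

theorem IsExtension.countP_inv_eq {E E' : History} (h : IsExtension E E') (o : ℕ) :
    E'.countP (fun e => e.isInv && e.op == o) = E.countP (fun e => e.isInv && e.op == o) := by
  obtain ⟨rs, rfl, hrs, -⟩ := h
  rw [List.countP_append, List.countP_eq_zero (l := rs).mpr fun e he => by simp [(hrs e he).1],
    add_zero]

theorem prec_comp_of_extension {E E' F' : History} {p q a b : ℕ} (hext : IsExtension (E ++ E') F')
    (hres : Event.res p a ∈ E) (hinv : Event.inv q b ∈ E') (hb : hasRes F' b) :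
    prec (comp F') a b := by
  obtain ⟨rs, hF', -⟩ := hext
  have hsub : List.Sublist [Event.res p a, Event.inv q b] F' :=
    hF' ▸ ((List.singleton_sublist.mpr hres).append (List.singleton_sublist.mpr hinv)).trans
      (List.sublist_append_left _ rs)
  have hkept := hsub.filter (fun e => !e.isInv || hasRes F' e.op)
  simp only [List.filter_cons, Event.isInv, Event.op, hb] at hkept
  exact prec_of_sublist hkept

theorem Seq.exists_inv_lt_of_res {S : History} (hS : Seq S) :
    ∀ {n p a : ℕ}, S[n]? = some (Event.res p a) → ∃ m < n, S[m]? = some (Event.inv p a) := by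
  induction hS with
  | nil => simp
  | step q o l _ ih =>
    rintro (_ | _ | n) p a h
    · simp at h
    · obtain ⟨rfl, rfl⟩ : q = p ∧ o = a := by simpa using h
      exact ⟨0, by simp⟩
    · obtain ⟨m, hm, hl⟩ := ih h
      exact ⟨m + 2, by omega, hl⟩

theorem Seq.exists_inv_le {S : History} (hS : Seq S) {n : ℕ} {e : Event} (h : S[n]? = some e) :
    ∃ m ≤ n, ∃ p, S[m]? = some (Event.inv p e.op) := by
  cases e with
  | inv p o => exact ⟨n, le_rfl, p, h⟩
  | res p o =>
    obtain ⟨m, hm, hS⟩ := hS.exists_inv_lt_of_res h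
    exact ⟨m, hm.le, p, hS⟩

theorem WellFormed.eq_of_getElem?_inv_of_equivalent_comp {F F' S : History} {j k p q o : ℕ}
    (hwf : WellFormed F) (hext : IsExtension F F') (hequiv : Equivalent (comp F') S)
    (hj : S[j]? = some (Event.inv p o)) (hk : S[k]? = some (Event.inv q o)) : j = k := by
  have hcount : S.countP (fun e => e.isInv && e.op == o) ≤ 1 :=
    calc S.countP (fun e => e.isInv && e.op == o)
        = (comp F').countP (fun e => e.isInv && e.op == o) := (hequiv.perm.countP_eq _).symm
      _ ≤ F'.countP (fun e => e.isInv && e.op == o) := List.filter_sublist.countP_le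
      _ = F.countP (fun e => e.isInv && e.op == o) := hext.countP_inv_eq o
      _ ≤ 1 := hwf.2.1 o
  exact List.eq_of_getElem?_of_countP_le_one hcount hj hk (by simp [Event.isInv, Event.op])
    (by simp [Event.isInv, Event.op])

theorem shortest_prefix_avoids_suffix_ops_general (E E' F F' S SE : History)
    (hF : F = E ++ E')
    (hwf : WellFormed F)
    (hext : IsExtension F F')
    (hseq : Seq S)
    (hequiv : Equivalent (comp F') S)
    (hmono : ∀ a b, prec (comp F') a b → prec S a b)
    (hSE : SE <+: S)
    (hmin : ∀ T, T <+: S → (∀ o, CompleteIn E o → ∃ p, Event.inv p o ∈ T) →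
      SE.length ≤ T.length) :
    ∀ o, (∃ p, Event.inv p o ∈ E') → ∀ e ∈ SE, e.op ≠ o := by
  rintro _ ⟨p, hinv⟩ e he rfl
  subst hF
  obtain ⟨n, hn⟩ := List.mem_iff_getElem?.mp he
  have hnSE : n < SE.length := (List.getElem?_eq_some_iff.mp hn).1
  have hnS : S[n]? = some e := by
    obtain ⟨t, rfl⟩ := hSE
    rwa [List.getElem?_append_left hnSE]
  obtain ⟨k, hkn, _, hk⟩ := hseq.exists_inv_le hnS
  have hhas : hasRes F' e.op := hasRes_of_mem_comp (hequiv.perm.mem_iff.mpr (hSE.subset he))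
  have hcover : ∀ o, CompleteIn E o → ∃ q, Event.inv q o ∈ S.take k := by
    rintro o ⟨-, r, hres⟩
    obtain ⟨i, j, q, _, hij, hi, hj⟩ := hmono _ _ (prec_comp_of_extension hext hres hinv hhas)
    obtain ⟨m, hmi, hm⟩ := hseq.exists_inv_lt_of_res hi
    have hjk : j = k := hwf.eq_of_getElem?_inv_of_equivalent_comp hext hequiv hj hk
    exact ⟨q, List.mem_of_getElem? (l := S.take k) (i := m)
      (by rw [List.getElem?_take_of_lt (by omega), hm])⟩
  have hle := hmin _ (List.take_prefix k S) hcover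
  have := List.length_take_le k S
  omega

/-- Let `S` be a linearization of `F = E ++ E'` obtained via an
extension `F'` of `F`, and let `SE` be the shortest prefix of `S` containing all
operations complete in `E`. Then `SE` contains no operation whose invocation
appears in `E'`. -/
theorem shortest_prefix_avoids_suffix_ops (E E' F F' S SE : History)
    (hF : F = E ++ E')
    (hwf : WellFormed F)
    (hext : IsExtension F F')
    (hseq : Seq S)
    (hequiv : Equivalent (comp F') S)
    (hmono : ∀ a b, prec (comp F') a b → prec S a b)
    (hSE : SE <+: S)
    (hall : ∀ o, CompleteIn E o → ∃ p, Event.inv p o ∈ SE)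
    (hmin : ∀ T, T <+: S → (∀ o, CompleteIn E o → ∃ p, Event.inv p o ∈ T) →
      SE.length ≤ T.length) :
    ∀ o, (∃ p, Event.inv p o ∈ E') → ∀ e ∈ SE, e.op ≠ o :=
  shortest_prefix_avoids_suffix_ops_general E E' F F' S SE hF hwf hext hseq hequiv hmono hSE hmin

end RV
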